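/- arXiv:math/0411021 — 2 statements merged into one kernel-verified Lean document; each statement's English description precedes it below -/
import Mathlib

section
/- Let T ≥ 0 be a self-adjoint positive operator on a Hilbert space and let r > 1/2, k ≥ 0, and m ≥ 0 be reals. Then, as an identity of Bochner integrals of bounded operators, ∫_0^∞ (2s)^m (1+s^2+T)^{-(k+m+r)} ds = (2^{m-1} Γ((m+1)/2) Γ(k+(m-1)/2+r)/Γ(k+m+r)) · (1+T)^{-(k+(m-1)/2+r)}. -/
open MeasureTheory ContinuousLinearMap

section AuxLemmas
open Set Real

lemma real_beta_Ioo {α β : ℝ} (hα : 0 < α) (hβ : 0 < β) :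
    ∫ t in Ioo (0:ℝ) 1, t ^ (α - 1) * (1 - t) ^ (β - 1) =
      Real.Gamma α * Real.Gamma β / Real.Gamma (α + β) := by
  have hG : Real.Gamma (α + β) ≠ 0 := (Real.Gamma_pos_of_pos (by linarith)).ne'
  have h2 : Complex.betaIntegral α β =
      ((∫ t in Ioo (0:ℝ) 1, t ^ (α - 1) * (1 - t) ^ (β - 1) : ℝ) : ℂ) := by
    rw [Complex.betaIntegral, intervalIntegral.integral_of_le zero_le_one,
      ← MeasureTheory.integral_Ioc_eq_integral_Ioo]
    refine Eq.trans (setIntegral_congr_fun measurableSet_Ioc fun x hx => ?_) integral_ofReal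
    have h1x : (0:ℝ) ≤ 1 - x := by linarith [hx.2]
    show (x:ℂ) ^ ((α:ℂ) - 1) * (1 - (x:ℂ)) ^ ((β:ℂ) - 1)
        = ((x ^ (α-1) * (1-x) ^ (β-1) : ℝ) : ℂ)
    push_cast
    rw [Complex.ofReal_cpow hx.1.le, Complex.ofReal_cpow h1x]
    push_cast
    ring
  have h1 := Complex.Gamma_mul_Gamma_eq_betaIntegral
      (by simpa using hα : 0 < (α:ℂ).re) (by simpa using hβ : 0 < (β:ℂ).re)
  rw [h2] at h1
  have h3 : ((Real.Gamma α * Real.Gamma β : ℝ) : ℂ) =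
      ((Real.Gamma (α + β) * ∫ t in Ioo (0:ℝ) 1, t ^ (α - 1) * (1 - t) ^ (β - 1) : ℝ) : ℂ) := by
    rw [Complex.ofReal_mul, Complex.ofReal_mul, ← Complex.Gamma_ofReal, ← Complex.Gamma_ofReal,
      ← Complex.Gamma_ofReal, Complex.ofReal_add]
    exact h1
  have h4 := Complex.ofReal_inj.mp h3
  field_simp
  linarith [h4]

lemma beta_Ioi {α β : ℝ} (hα : 0 < α) (hβ : 0 < β) :
    ∫ v in Ioi (0:ℝ), v ^ (α - 1) * (1 + v) ^ (-(α + β)) =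
      Real.Gamma α * Real.Gamma β / Real.Gamma (α + β) := by
  set f : ℝ → ℝ := fun t => (1 - t)⁻¹ - 1 with hf
  have himg : f '' Ioo (0:ℝ) 1 = Ioi (0:ℝ) := by
    ext y
    constructor
    · rintro ⟨t, ht, rfl⟩
      have h1 : 0 < 1 - t := by linarith [ht.2]
      have : (1:ℝ) < (1 - t)⁻¹ := by
        rw [lt_inv_comm₀ one_pos h1]; simpa using ht.1
      simp only [f, mem_Ioi]; linarith
    · intro hy
      have hy' : 0 < y := hy
      refine ⟨y / (1 + y), ⟨by positivity, ?_⟩, ?_⟩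
      · rw [div_lt_one (by positivity)]; linarith
      · have h1y : (1:ℝ) + y ≠ 0 := by positivity
        simp only [f]
        rw [show 1 - y / (1+y) = 1 / (1+y) by field_simp; ring]
        field_simp
        ring
  have hderiv : ∀ t ∈ Ioo (0:ℝ) 1, HasDerivWithinAt f (((1-t)^2)⁻¹) (Ioo (0:ℝ) 1) t := by
    intro t ht
    have h1 : (1:ℝ) - t ≠ 0 := by have := ht.2; intro h; simp only [sub_eq_zero] at h; linarith
    have : HasDerivAt f (((1-t)^2)⁻¹) t := by
      have h := (((hasDerivAt_id t).const_sub 1).inv h1).sub_const 1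
      convert h using 1
      · rfl
      · rfl
      · rfl
      · simp only [id]; ring
    exact this.hasDerivWithinAt
  have hinj : InjOn f (Ioo (0:ℝ) 1) := by
    intro a ha b hb hab
    have h1 : (1:ℝ) - a ≠ 0 := by have := ha.2; intro h; simp only [sub_eq_zero] at h; linarith
    have h2 : (1:ℝ) - b ≠ 0 := by have := hb.2; intro h; simp only [sub_eq_zero] at h; linarith
    have : ((1:ℝ) - a)⁻¹ = (1 - b)⁻¹ := by simpa [f, sub_left_inj] using hab
    have := inv_injective this
    linarith [this]
  have key := integral_image_eq_integral_abs_deriv_smul measurableSet_Ioo hderiv hinj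
      (fun v => v ^ (α - 1) * (1 + v) ^ (-(α + β)))
  rw [himg] at key
  rw [key, ← real_beta_Ioo hα hβ]
  refine setIntegral_congr_fun measurableSet_Ioo fun t ht => ?_
  have ht0 : 0 < t := ht.1
  have hu : 0 < 1 - t := by linarith [ht.2]
  have hft : f t = t / (1 - t) := by
    simp only [f]; field_simp; ring
  have h1f : 1 + t / (1 - t) = (1 - t)⁻¹ := by field_simp; ring
  rw [smul_eq_mul, hft, h1f, abs_of_nonneg (by positivity),
    Real.div_rpow ht0.le hu.le, Real.inv_rpow hu.le, ← Real.rpow_neg hu.le, neg_neg]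
  rw [show ((1-t)^2)⁻¹ = ((1-t):ℝ) ^ (-2 : ℝ) by
    rw [Real.rpow_neg hu.le, Real.rpow_two]]
  rw [div_eq_mul_inv, ← Real.rpow_neg hu.le]
  calc (1-t) ^ (-2:ℝ) * (t ^ (α-1) * (1-t) ^ (-(α-1)) * (1-t) ^ (α+β))
      = t ^ (α-1) * ((1-t) ^ (-2:ℝ) * (1-t) ^ (-(α-1)) * (1-t) ^ (α+β)) := by ring
    _ = t ^ (α-1) * (1-t) ^ (β-1) := by
        rw [← Real.rpow_add hu, ← Real.rpow_add hu]
        ring_nf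

lemma scalar_main {m q a : ℝ} (hm : 0 ≤ m) (hq : (m + 1) / 2 < q) (ha : 0 < a) :
    ∫ s in Ioi (0:ℝ), (2 * s) ^ m * (a + s ^ 2) ^ (-q) =
      2 ^ (m - 1) * Real.Gamma ((m + 1) / 2) * Real.Gamma (q - (m + 1) / 2) / Real.Gamma q *
        a ^ ((m + 1) / 2 - q) := by
  set α : ℝ := (m + 1) / 2 with hαdef
  have hα : 0 < α := by positivity
  have hβ : 0 < q - α := by simp only [hαdef]; linarith
  -- pull out 2^m
  have step1 : ∫ s in Ioi (0:ℝ), (2 * s) ^ m * (a + s ^ 2) ^ (-q)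
      = 2 ^ m * ∫ s in Ioi (0:ℝ), s ^ m * (a + s ^ 2) ^ (-q) := by
    rw [← integral_const_mul]
    refine setIntegral_congr_fun measurableSet_Ioi fun s hs => ?_
    rw [Real.mul_rpow (by norm_num) (le_of_lt hs), mul_assoc]
  -- substitution u = s^2
  have step2 : ∫ s in Ioi (0:ℝ), s ^ m * (a + s ^ 2) ^ (-q)
      = (1/2 : ℝ) * ∫ u in Ioi (0:ℝ), u ^ (α - 1) * (a + u) ^ (-q) := by
    rw [← integral_const_mul,
      ← integral_comp_rpow_Ioi_of_pos (g := fun u => (1/2 : ℝ) * (u ^ (α - 1) * (a + u) ^ (-q)))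
      (two_pos)]
    refine setIntegral_congr_fun measurableSet_Ioi fun s hs => ?_
    have hs0 : (0:ℝ) < s := hs
    have h2 : s ^ (2:ℝ) = s ^ 2 := Real.rpow_two s
    have h3 : (s ^ (2:ℝ)) ^ (α - 1) = s ^ (m - 1) := by
      rw [← Real.rpow_mul hs0.le]
      congr 1
      simp only [hαdef]; ring
    have h4 : s ^ m = s ^ (1:ℝ) * s ^ (m - 1) := by
      rw [← Real.rpow_add hs0]; norm_num
    rw [smul_eq_mul, h3, h2, h4, Real.rpow_one]
    norm_num
    ring
  -- scaling u = a * v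
  have e1 := integral_comp_mul_left_Ioi (fun u => u ^ (α - 1) * (a + u) ^ (-q)) 0 ha
  rw [mul_zero] at e1
  have e2 : ∫ x in Ioi (0:ℝ), (a * x) ^ (α - 1) * (a + a * x) ^ (-q)
      = (a ^ (α - 1) * a ^ (-q)) * ∫ v in Ioi (0:ℝ), v ^ (α - 1) * (1 + v) ^ (-q) := by
    rw [← integral_const_mul]
    refine setIntegral_congr_fun measurableSet_Ioi fun v hv => ?_
    have hv0 : (0:ℝ) < v := hv
    rw [Real.mul_rpow ha.le hv0.le, show a + a * v = a * (1 + v) by ring,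
      Real.mul_rpow ha.le (by linarith)]
    ring
  have e1' : ∫ x in Ioi (0:ℝ), (a * x) ^ (α - 1) * (a + a * x) ^ (-q)
      = a⁻¹ • ∫ u in Ioi (0:ℝ), u ^ (α - 1) * (a + u) ^ (-q) := e1
  have step3 : ∫ u in Ioi (0:ℝ), u ^ (α - 1) * (a + u) ^ (-q)
      = a ^ (α - q) * ∫ v in Ioi (0:ℝ), v ^ (α - 1) * (1 + v) ^ (-q) := by
    rw [e2, smul_eq_mul] at e1'
    have h5 : ∫ u in Ioi (0:ℝ), u ^ (α - 1) * (a + u) ^ (-q)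
        = a * (a ^ (α - 1) * a ^ (-q) * ∫ v in Ioi (0:ℝ), v ^ (α - 1) * (1 + v) ^ (-q)) := by
      rw [e1']
      field_simp
    have h6 : a * (a ^ (α - 1) * a ^ (-q)) = a ^ (α - q) := by
      nth_rewrite 1 [← Real.rpow_one a]
      rw [← Real.rpow_add ha, ← Real.rpow_add ha]
      congr 1; ring
    rw [h5, ← h6]; ring
  -- the beta integral
  have hbeta : ∫ v in Ioi (0:ℝ), v ^ (α - 1) * (1 + v) ^ (-q)
      = Real.Gamma α * Real.Gamma (q - α) / Real.Gamma q := by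
    have := beta_Ioi hα hβ
    rw [show α + (q - α) = q by ring] at this
    exact this
  rw [step1, step2, step3, hbeta,
    show (2:ℝ) ^ (m - 1) = 2 ^ m * (1/2 : ℝ) by
      rw [Real.rpow_sub two_pos, Real.rpow_one]; ring]
  ring

lemma bound_integrable {m q : ℝ} (hm : 0 ≤ m) (hq : (m + 1) / 2 < q) :
    IntegrableOn (fun s : ℝ => |2 * s| ^ m * (1 + s ^ 2) ^ (-q)) (Ioi (0:ℝ)) := by
  have hqpos : 0 < q := by nlinarith
  have hcont : Continuous (fun s : ℝ => |2 * s| ^ m * (1 + s ^ 2) ^ (-q)) := by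
    refine Continuous.mul ?_ ?_
    · exact (continuous_const.mul continuous_id).abs.rpow_const fun x => Or.inr hm
    · refine Continuous.rpow_const (by continuity) fun x => Or.inl (by positivity)
  rw [← Ioc_union_Ioi_eq_Ioi (zero_le_one : (0:ℝ) ≤ 1)]
  refine IntegrableOn.union (hcont.integrableOn_Ioc) ?_
  refine Integrable.mono' (g := fun s : ℝ => 2 ^ m * s ^ (m - 2 * q))
    ((integrableOn_Ioi_rpow_of_lt (by linarith : m - 2 * q < -1) one_pos).const_mul _)
    (hcont.aestronglyMeasurable.restrict) ?_
  rw [ae_restrict_iff' measurableSet_Ioi]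
  refine ae_of_all _ fun s hs => ?_
  have hs1 : (1:ℝ) < s := hs
  have hs0 : (0:ℝ) < s := by linarith
  have h1 : ‖|2 * s| ^ m * (1 + s ^ 2) ^ (-q)‖ = |2 * s| ^ m * (1 + s ^ 2) ^ (-q) := by
    rw [Real.norm_eq_abs, abs_of_nonneg (by positivity)]
  rw [h1, abs_of_nonneg (by positivity : (0:ℝ) ≤ 2 * s),
    Real.mul_rpow (by norm_num) hs0.le]
  have h2 : (1 + s ^ 2) ^ (-q) ≤ (s ^ 2) ^ (-q) := by
    refine Real.rpow_le_rpow_of_nonpos (by positivity) (by linarith) (by linarith)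
  have h3 : (s:ℝ) ^ m * (s ^ 2) ^ (-q) = s ^ (m - 2 * q) := by
    rw [← Real.rpow_two, ← Real.rpow_mul hs0.le, ← Real.rpow_add hs0]
    congr 1; ring
  calc 2 ^ m * s ^ m * (1 + s ^ 2) ^ (-q) ≤ 2 ^ m * s ^ m * (s ^ 2) ^ (-q) := by
        refine mul_le_mul_of_nonneg_left h2 (by positivity)
    _ = 2 ^ m * s ^ (m - 2 * q) := by rw [mul_assoc, h3]

end AuxLemmas

open Set Real in
/-- For a positive (self-adjoint) operator `T ≥ 0` on a Hilbert space and reals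
`r > 1/2`, `k ≥ 0`, `m ≥ 0`, as an identity of Bochner integrals of bounded operators
(powers taken via the continuous functional calculus):
`∫_0^∞ (2s)^m (1+s²+T)^{-(k+m+r)} ds
  = (2^{m-1} Γ((m+1)/2) Γ(k+(m-1)/2+r)/Γ(k+m+r)) · (1+T)^{-(k+(m-1)/2+r)}`. -/
theorem integral_shifted_power_eq {H : Type*} [NormedAddCommGroup H]
    [InnerProductSpace ℂ H] [CompleteSpace H]
    (T : H →L[ℂ] H) (hT : T.IsPositive) (r k m : ℝ)
    (hr : 1 / 2 < r) (hk : 0 ≤ k) (hm : 0 ≤ m) :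
    ∫ s in Set.Ioi (0 : ℝ),
        ((2 * s) ^ m) • cfc (fun x : ℝ => (1 + s ^ 2 + x) ^ (-(k + m + r))) T =
      (2 ^ (m - 1) * Real.Gamma ((m + 1) / 2) * Real.Gamma (k + (m - 1) / 2 + r) /
          Real.Gamma (k + m + r)) •
        cfc (fun x : ℝ => (1 + x) ^ (-(k + (m - 1) / 2 + r))) T := by
  have hspec : ∀ x ∈ spectrum ℝ T, (0:ℝ) ≤ x := by
    have h := hT.spectrumRestricts
    rw [SpectrumRestricts.nnreal_iff] at h
    exact h
  set q : ℝ := k + m + r with hqdef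
  set p : ℝ := k + (m - 1) / 2 + r with hpdef
  have hq : (m + 1) / 2 < q := by simp only [hqdef]; linarith
  have hppos : 0 < p := by simp only [hpdef]; linarith
  have hqpos : 0 < q := by linarith
  have hTsa : IsSelfAdjoint T := hT.isSelfAdjoint
  have hf : Continuous (Function.uncurry fun (s : ℝ) =>
      (spectrum ℝ T).restrict (fun x : ℝ => (2 * s) ^ m * (1 + s ^ 2 + x) ^ (-q))) := by
    have h1 : Continuous (fun pr : ℝ × (spectrum ℝ T) => (2 * pr.1) ^ m) :=
      (continuous_const.mul continuous_fst).rpow_const fun _ => Or.inr hm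
    have h2 : Continuous (fun pr : ℝ × (spectrum ℝ T) => (1 + pr.1 ^ 2 + (pr.2 : ℝ)) ^ (-q)) := by
      refine Continuous.rpow_const ?_ fun pr => Or.inl ?_
      · exact (continuous_const.add ((continuous_fst.pow 2))).add
          (continuous_subtype_val.comp continuous_snd)
      · have h3 := hspec pr.2.1 pr.2.2
        have : (0:ℝ) < 1 + pr.1 ^ 2 + (pr.2 : ℝ) := by nlinarith [sq_nonneg pr.1]
        exact this.ne'
    exact h1.mul h2
  have hbound : ∀ s : ℝ, ∀ z ∈ spectrum ℝ T,
      ‖(2 * s) ^ m * (1 + s ^ 2 + z) ^ (-q)‖ ≤ ‖|2 * s| ^ m * (1 + s ^ 2) ^ (-q)‖ := by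
    intro s z hz
    have hz0 := hspec z hz
    have hb1 : (0:ℝ) < 1 + s ^ 2 := by positivity
    have hb2 : (0:ℝ) < 1 + s ^ 2 + z := by linarith
    rw [Real.norm_eq_abs, Real.norm_eq_abs, abs_mul, abs_mul,
      abs_of_nonneg (Real.rpow_nonneg hb2.le _),
      abs_of_nonneg (Real.rpow_nonneg (abs_nonneg _) _),
      abs_of_nonneg (Real.rpow_nonneg hb1.le _)]
    refine mul_le_mul (Real.abs_rpow_le_abs_rpow _ _)
      (Real.rpow_le_rpow_of_nonpos hb1 (by linarith) (by linarith))
      (Real.rpow_nonneg hb2.le _) (Real.rpow_nonneg (abs_nonneg _) _)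
  have hfin : HasFiniteIntegral (fun s : ℝ => |2 * s| ^ m * (1 + s ^ 2) ^ (-q))
      (volume.restrict (Set.Ioi (0:ℝ))) := (bound_integrable hm hq).2
  have hf' : ContinuousOn (fun pr : ℝ × ℝ => (2 * pr.1) ^ m * (1 + pr.1 ^ 2 + pr.2) ^ (-q))
      (Set.univ ×ˢ spectrum ℝ T) := by
    refine ContinuousOn.mul ?_ ?_
    · exact ((continuous_const.mul continuous_fst).rpow_const fun _ => Or.inr hm).continuousOn
    · refine ContinuousOn.rpow_const ((continuous_const.add (continuous_fst.pow 2)).add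
        continuous_snd).continuousOn fun pr hpr => Or.inl ?_
      have h3 := hspec pr.2 hpr.2
      exact (by nlinarith [sq_nonneg pr.1] : (0:ℝ) < 1 + pr.1 ^ 2 + pr.2).ne'
  have key := cfc_integral (μ := volume.restrict (Set.Ioi (0:ℝ)))
      (fun (s : ℝ) (x : ℝ) => (2 * s) ^ m * (1 + s ^ 2 + x) ^ (-q))
      (fun s : ℝ => |2 * s| ^ m * (1 + s ^ 2) ^ (-q)) T hf'
      (Filter.Eventually.of_forall fun s z hz => (hbound s z hz).trans (le_of_eq (Real.norm_of_nonneg (by positivity)))) hfin hTsa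
  have hcontOn : ∀ s : ℝ, ContinuousOn (fun x : ℝ => (1 + s ^ 2 + x) ^ (-q))
      (spectrum ℝ T) := by
    intro s
    refine ContinuousOn.rpow_const ((continuous_const.add continuous_id).continuousOn)
      fun x hx => Or.inl ?_
    have := hspec x hx
    have h0 : (0:ℝ) < 1 + s ^ 2 + x := by nlinarith [sq_nonneg s]
    exact h0.ne'
  have hcontOn2 : ContinuousOn (fun x : ℝ => (1 + x) ^ (-p)) (spectrum ℝ T) := by
    refine ContinuousOn.rpow_const ((continuous_const.add continuous_id).continuousOn)
      fun x hx => Or.inl ?_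
    have := hspec x hx
    have h0 : (0:ℝ) < 1 + x := by linarith
    exact h0.ne'
  have hinteg : ∀ s : ℝ, ((2 * s) ^ m) • cfc (fun x : ℝ => (1 + s ^ 2 + x) ^ (-q)) T
      = cfc (fun x : ℝ => (2 * s) ^ m * (1 + s ^ 2 + x) ^ (-q)) T := by
    intro s
    exact (cfc_const_mul ((2 * s) ^ m) (fun x : ℝ => (1 + s ^ 2 + x) ^ (-q)) T (hcontOn s)).symm
  simp_rw [hinteg]
  rw [← key, ← cfc_const_mul (2 ^ (m - 1) * Real.Gamma ((m + 1) / 2) * Real.Gamma p / Real.Gamma q)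
    (fun x : ℝ => (1 + x) ^ (-p)) T hcontOn2]
  refine cfc_congr fun x hx => ?_
  have hx0 := hspec x hx
  have hax : (0:ℝ) < 1 + x := by linarith
  have hval := scalar_main hm hq hax
  have hrw : (fun s : ℝ => (2 * s) ^ m * (1 + s ^ 2 + x) ^ (-q))
      = fun s : ℝ => (2 * s) ^ m * ((1 + x) + s ^ 2) ^ (-q) := by
    funext s
    rw [add_right_comm 1 (s ^ 2) x]
  rw [hrw, hval,
    show (m + 1) / 2 - q = -p by simp only [hqdef, hpdef]; ring,
    show q - (m + 1) / 2 = p by simp only [hqdef, hpdef]; ring]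
end

section
/- Let N be a semifinite von Neumann algebra with faithful normal semifinite trace τ and let P, Q be projections in N. If T = V|T| ∈ PNQ is (P·Q)-Fredholm with polar decomposition T = V|T|, then the partial isometry V is (P·Q)-Fredholm with Ind(V) = Ind(T), and |T| ∈ QNQ is (Q·Q)-Fredholm of index 0. -/
open MeasureTheory ContinuousLinearMap
open scoped ENNReal NNReal

noncomputable section

variable {H : Type*} [NormedAddCommGroup H] [InnerProductSpace ℂ H] [CompleteSpace H]

/-- The orthogonal projection onto the closure of a submodule, as an operator on `H`. -/
noncomputable def projOnto (K : Submodule ℂ H) : H →L[ℂ] H :=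
  haveI : CompleteSpace K.topologicalClosure :=
    K.isClosed_topologicalClosure.completeSpace_coe
  K.topologicalClosure.subtypeL ∘L Submodule.orthogonalProjectionOnto K.topologicalClosure

/-- A (self-adjoint, idempotent) projection operator. -/
def IsProjOp (P : H →L[ℂ] H) : Prop := IsSelfAdjoint P ∧ P ∘L P = P

/-- A faithful normal semifinite trace on a von Neumann algebra `N`, together with its
real-valued extension `τℝ` to trace-class operators. -/
structure Trace (N : VonNeumannAlgebra H) where
  τ : (H →L[ℂ] H) → ℝ≥0∞
  τℝ : (H →L[ℂ] H) → ℝ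
  map_add : ∀ S T : H →L[ℂ] H, S.IsPositive → T.IsPositive → τ (S + T) = τ S + τ T
  map_smul : ∀ (c : ℝ≥0) (T : H →L[ℂ] H), T.IsPositive → τ ((c : ℝ) • T) = c * τ T
  tracial : ∀ T : H →L[ℂ] H, τ (adjoint T ∘L T) = τ (T ∘L adjoint T)
  faithful : ∀ T : H →L[ℂ] H, T.IsPositive → τ T = 0 → T = 0
  semifinite : ∀ P : H →L[ℂ] H, P ∈ N → IsProjOp P → P ≠ 0 →
    ∃ E : H →L[ℂ] H, E ∈ N ∧ IsProjOp E ∧ P ∘L E = E ∧ E ≠ 0 ∧ τ E < ∞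
  τℝ_pos : ∀ T : H →L[ℂ] H, T.IsPositive → τℝ T = (τ T).toReal
  τℝ_add : ∀ S T A B : H →L[ℂ] H, A.IsPositive → B.IsPositive →
    A ∘L A = adjoint S ∘L S → B ∘L B = adjoint T ∘L T → τ A < ∞ → τ B < ∞ →
    τℝ (S + T) = τℝ S + τℝ T
  τℝ_tracial : ∀ S T A : H →L[ℂ] H, A.IsPositive → A ∘L A = adjoint S ∘L S → τ A < ∞ →
    τℝ (S ∘L T) = τℝ (T ∘L S)

/-- Membership in the "skew corner" `P N Q`. -/
def MemCorner (N : VonNeumannAlgebra H) (P Q T : H →L[ℂ] H) : Prop :=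
  T ∈ N ∧ P ∘L T ∘L Q = T

/-- The projection `N_T^Q` onto `ker T ∩ range Q`. -/
noncomputable def kerProjIn (T Q : H →L[ℂ] H) : H →L[ℂ] H :=
  projOnto (LinearMap.ker (T : H →ₗ[ℂ] H) ⊓ LinearMap.range (Q : H →ₗ[ℂ] H))

variable {N : VonNeumannAlgebra H}

/-- `(P·Q)`-Fredholm for a bounded operator `T ∈ PNQ`. -/
def IsPQFredholm (tr : Trace N) (P Q T : H →L[ℂ] H) : Prop :=
  tr.τ (kerProjIn T Q) < ∞ ∧ tr.τ (kerProjIn (adjoint T) P) < ∞ ∧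
  ∃ E : H →L[ℂ] H, E ∈ N ∧ IsProjOp E ∧ P ∘L E = E ∧ tr.τ E < ∞ ∧
    LinearMap.range ((P - E : H →L[ℂ] H) : H →ₗ[ℂ] H) ≤ LinearMap.range (T : H →ₗ[ℂ] H)

/-- The `(P·Q)`-index `Ind(T) = τ(N_T^Q) − τ(N_{T*}^P)`. -/
noncomputable def pqIndex (tr : Trace N) (P Q T : H →L[ℂ] H) : ℝ :=
  (tr.τ (kerProjIn T Q)).toReal - (tr.τ (kerProjIn (adjoint T) P)).toReal

/-- The ideal `K_N` of `τ`-compact operators: the norm closure of the span of the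
`τ`-finite projections in `N`. -/
def tauCompact (tr : Trace N) : Set (H →L[ℂ] H) :=
  closure ((Submodule.span ℂ
    {E : H →L[ℂ] H | E ∈ N ∧ IsProjOp E ∧ tr.τ E < ∞} : Submodule ℂ (H →L[ℂ] H)) :
    Set (H →L[ℂ] H))


/-- `T = V|T|` is a polar decomposition of `T`: `|T| = A` is the positive square root of
`T*T`, `V` is a partial isometry with `ker V = ker A`, and `T = V ∘ A`. -/
def IsPolarDecomp (T V A : H →L[ℂ] H) : Prop :=
  A.IsPositive ∧ A ∘L A = adjoint T ∘L T ∧ T = V ∘L A ∧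
  V ∘L adjoint V ∘L V = V ∧ LinearMap.ker (V : H →ₗ[ℂ] H) = LinearMap.ker (A : H →ₗ[ℂ] H)

/-! In the polar decomposition `T = V|T|` the three operators `T`, `V`, `|T|` share their kernel,
and `T*`, `V*` share theirs, so all kernel projections, and hence the indices, agree with those of
`T`, while `|T|` is self-adjoint and so has index `0`. Everything commuting with `T` and `T*`
commutes with `|T| = (T*T)^{1/2}` and then with `V`, so both lie in `N` by the double commutant
theorem. The range condition passes to `V` since `range T ⊆ range V`. For `|T|`, let `E` be the
`τ`-finite projection with `range (P - E) ⊆ range T`; then `P - E ≤ VV*` compresses to the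
projection `V*(P - E)V ≤ Q`, whose complement in `Q` is `N_{|T|}^Q + V*EV`, and
`τ(V*EV) = τ(E VV* E) ≤ τ(E) < ∞`. -/

def IsPartialIsometry {R : Type*} [Mul R] [Star R] (v : R) : Prop := v * (star v * v) = v

section PartialIsometry

variable {R : Type*} [Semigroup R] [StarMul R]

namespace IsPartialIsometry

variable {v : R}

theorem star_mul_self_mul_star (hv : IsPartialIsometry v) : star v * (v * star v) = star v := by
  simpa only [star_mul, star_star, mul_assoc] using congr(star $hv)

theorem isStarProjection_star_mul_self (hv : IsPartialIsometry v) :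
    IsStarProjection (star v * v) where
  isIdempotentElem := by rw [IsIdempotentElem, mul_assoc, hv]
  isSelfAdjoint := .star_mul_self v

theorem isStarProjection_mul_star_self (hv : IsPartialIsometry v) :
    IsStarProjection (v * star v) where
  isIdempotentElem := by rw [IsIdempotentElem, mul_assoc, hv.star_mul_self_mul_star]
  isSelfAdjoint := .mul_star_self v

end IsPartialIsometry

theorem IsStarProjection.star_left_conjugate {v e : R} (he : IsStarProjection e)
    (hve : v * star v * e = e) : IsStarProjection (star v * e * v) where
  isIdempotentElem := calc
    star v * e * v * (star v * e * v) = star v * e * (v * star v * e) * v := by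
      simp only [mul_assoc]
    _ = star v * e * v := by rw [hve, mul_assoc (star v) e e, he.isIdempotentElem.eq]
  isSelfAdjoint := he.isSelfAdjoint.conjugate' v

end PartialIsometry

theorem isProjOp_iff_isStarProjection {P : H →L[ℂ] H} : IsProjOp P ↔ IsStarProjection P :=
  ⟨fun h => ⟨h.2, h.1⟩, fun h => ⟨h.2, h.1⟩⟩

theorem projOnto_eq_starProjection {K : Submodule ℂ H} [K.HasOrthogonalProjection]
    (hK : IsClosed (K : Set H)) : projOnto K = K.starProjection := by
  have : ∀ K' : Submodule ℂ H, K' = K → ∀ [K'.HasOrthogonalProjection],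
      K'.starProjection = K.starProjection := by
    rintro _ rfl _; rfl
  exact this _ hK.submodule_topologicalClosure_eq

theorem IsStarProjection.projOnto_range {P : H →L[ℂ] H} (hP : IsStarProjection P) :
    projOnto P.range = P := by
  have hcl := hP.isIdempotentElem.isClosed_range
  obtain ⟨_, hP⟩ := isStarProjection_iff_eq_starProjection_range.mp hP
  conv_rhs => rw [hP]
  exact projOnto_eq_starProjection hcl

-- `ker A` and `(ker A)ᗮ = closure (range A)` span `H`, and `D₁ - D₂` vanishes on both.
theorem IsSelfAdjoint.eq_of_mul_eq_of_ker_le {A D₁ D₂ : H →L[ℂ] H} (hA : IsSelfAdjoint A)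
    (h : D₁ * A = D₂ * A) (h₁ : A.ker ≤ D₁.ker) (h₂ : A.ker ≤ D₂.ker) : D₁ = D₂ := by
  rw [← sub_eq_zero]
  have hker : A.ker ≤ (D₁ - D₂).ker := fun x hx => by
    simp [LinearMap.mem_ker.mp (h₁ hx), LinearMap.mem_ker.mp (h₂ hx)]
  have horth : A.kerᗮ ≤ (D₁ - D₂).ker := by
    rw [orthogonal_ker, ← star_eq_adjoint, hA.star_eq]
    refine Submodule.topologicalClosure_minimal _ ?_ (isClosed_ker _)
    rintro _ ⟨x, rfl⟩
    simpa [sub_eq_zero] using congr($h x)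
  have htop := sup_le hker horth
  rw [A.ker.sup_orthogonal_of_hasOrthogonalProjection, top_le_iff, LinearMap.ker_eq_top]
    at htop
  exact coe_inj.mp htop

theorem isStarProjection_kerProjIn (T Q : H →L[ℂ] H) : IsStarProjection (kerProjIn T Q) :=
  haveI : CompleteSpace (T.ker ⊓ Q.range).topologicalClosure :=
    (T.ker ⊓ Q.range).isClosed_topologicalClosure.completeSpace_coe
  isStarProjection_starProjection

theorem kerProjIn_congr {S T : H →L[ℂ] H} (h : S.ker = T.ker) (Q : H →L[ℂ] H) :
    kerProjIn S Q = kerProjIn T Q := by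
  rw [kerProjIn, kerProjIn, h]

theorem IsPartialIsometry.kerProjIn_eq {V Q : H →L[ℂ] H} (hV : IsPartialIsometry V)
    (hQ : IsStarProjection Q) (hVQ : V * Q = V) : kerProjIn V Q = Q - star V * V := by
  have hG : IsStarProjection (Q - star V * V) :=
    hV.isStarProjection_star_mul_self.sub_of_mul_eq_left hQ (by rw [mul_assoc, hVQ])
  rw [kerProjIn, ← hG.projOnto_range]
  congr 1
  ext x
  simp only [Submodule.mem_inf, LinearMap.mem_ker, coe_coe,
    LinearMap.IsIdempotentElem.mem_range_iff hQ.isIdempotentElem.toLinearMap,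
    LinearMap.IsIdempotentElem.mem_range_iff hG.isIdempotentElem.toLinearMap]
  have hVG : V * (Q - star V * V) = 0 := by rw [mul_sub, hVQ, hV, sub_self]
  have hQG : Q * (Q - star V * V) = Q - star V * V := by
    have hQV : Q * star V = star V := by
      simpa [star_mul, hQ.isSelfAdjoint.star_eq] using congr(star $hVQ)
    rw [mul_sub, hQ.isIdempotentElem.eq, ← mul_assoc, hQV]
  constructor
  · rintro ⟨hVx, hQx⟩
    simp [hVx, hQx]
  · intro hx
    rw [← hx]
    exact ⟨congr($hVG x), congr($hQG x)⟩

theorem pqIndex_self_eq_zero_of_isSelfAdjoint (tr : Trace N)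
    {Q A : H →L[ℂ] H} (hA : IsSelfAdjoint A) : pqIndex tr Q Q A = 0 := by
  rw [pqIndex, hA.adjoint_eq, sub_self]

namespace Trace

variable (tr : Trace N)

theorem τ_star_mul_self (X : H →L[ℂ] H) : tr.τ (star X * X) = tr.τ (X * star X) :=
  tr.tracial X

theorem τ_mono {S T : H →L[ℂ] H} (hS : 0 ≤ S) (hST : S ≤ T) : tr.τ S ≤ tr.τ T := by
  have := tr.map_add S (T - S) ((nonneg_iff_isPositive S).mp hS)
    ((nonneg_iff_isPositive _).mp (sub_nonneg.mpr hST))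
  rw [add_sub_cancel] at this
  exact this ▸ le_self_add

theorem τ_star_mul_mul_le {E V : H →L[ℂ] H} (hE : IsStarProjection E)
    (hV : IsPartialIsometry V) : tr.τ (star V * E * V) ≤ tr.τ E := by
  have hVE : star V * E * V = star (E * V) * (E * V) := by
    rw [star_mul, hE.isSelfAdjoint.star_eq, ← mul_assoc, mul_assoc (star V) E E,
      hE.isIdempotentElem.eq]
  have hEV : E * V * star (E * V) = star E * (V * star V) * E := by
    rw [star_mul, hE.isSelfAdjoint.star_eq]; simp only [mul_assoc]
  have hVV := hV.isStarProjection_mul_star_self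
  calc tr.τ (star V * E * V) = tr.τ (star E * (V * star V) * E) := by
        rw [hVE, τ_star_mul_self, hEV]
    _ ≤ tr.τ (star E * 1 * E) :=
        tr.τ_mono (star_left_conjugate_nonneg hVV.nonneg E)
          (star_left_conjugate_le_conjugate hVV.le_one E)
    _ = tr.τ E := by rw [mul_one, hE.isSelfAdjoint.star_eq, hE.isIdempotentElem.eq]

end Trace

theorem VonNeumannAlgebra.mem_of_forall_commute {N : VonNeumannAlgebra H} {X : H →L[ℂ] H}
    (hX : ∀ S ∈ N.commutant, Commute S X) : X ∈ N := by
  rw [← N.commutant_commutant]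
  exact VonNeumannAlgebra.mem_commutant_iff.mpr hX

theorem MemCorner.mul_right_eq {P Q T : H →L[ℂ] H} (hT : MemCorner N P Q T)
    (hQ : IsIdempotentElem Q) : T * Q = T := by
  obtain ⟨-, hT⟩ := hT
  change P * (T * Q) = T at hT
  rw [← hT, mul_assoc, mul_assoc, hQ.eq]

theorem MemCorner.mul_left_eq {P Q T : H →L[ℂ] H} (hT : MemCorner N P Q T)
    (hP : IsIdempotentElem P) : P * T = T := by
  obtain ⟨-, hT⟩ := hT
  change P * (T * Q) = T at hT
  rw [← hT, ← mul_assoc, hP.eq]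

namespace IsPolarDecomp

variable {T V A : H →L[ℂ] H}

theorem isPartialIsometry (h : IsPolarDecomp T V A) : IsPartialIsometry V := h.2.2.2.1

theorem isSelfAdjoint_abs (h : IsPolarDecomp T V A) : IsSelfAdjoint A := h.1.isSelfAdjoint

theorem eq_mul (h : IsPolarDecomp T V A) : T = V * A := h.2.2.1

theorem cfcAbs_eq (h : IsPolarDecomp T V A) : CFC.abs T = A :=
  CFC.sqrt_unique h.2.1 ((nonneg_iff_isPositive A).mpr h.1)

theorem ker_abs (h : IsPolarDecomp T V A) : A.ker = T.ker :=
  calc A.ker = (adjoint A ∘L A).ker := (ker_adjoint_comp_self A).symm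
    _ = (adjoint T ∘L T).ker := by rw [h.isSelfAdjoint_abs.adjoint_eq, h.2.1]
    _ = T.ker := ker_adjoint_comp_self T

theorem ker_partialIsometry (h : IsPolarDecomp T V A) : V.ker = T.ker :=
  h.2.2.2.2.trans h.ker_abs

theorem apply_eq_zero_iff (h : IsPolarDecomp T V A) (x : H) : V x = 0 ↔ A x = 0 := by
  simpa only [LinearMap.mem_ker, coe_coe] using SetLike.ext_iff.mp h.2.2.2.2 x

-- `x - V*V x` lies in `ker V = ker A`.
theorem abs_mul_star_mul_self (h : IsPolarDecomp T V A) : A * (star V * V) = A := by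
  ext x
  have hV : V (x - (star V * V) x) = 0 := by
    simpa [sub_eq_zero] using congr($(h.isPartialIsometry) x).symm
  have hA := (h.apply_eq_zero_iff _).mp hV
  rw [map_sub, sub_eq_zero] at hA
  exact hA.symm

theorem star_mul_eq_abs (h : IsPolarDecomp T V A) : star V * T = A := by
  have := congr(star $(h.abs_mul_star_mul_self))
  rw [star_mul, star_mul, star_star, h.isSelfAdjoint_abs.star_eq] at this
  rw [h.eq_mul, ← mul_assoc, this]

theorem mul_star_mul_eq (h : IsPolarDecomp T V A) : V * star V * T = T := by
  rw [h.eq_mul, mul_assoc, ← mul_assoc (star V), ← mul_assoc, h.isPartialIsometry]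

theorem ker_adjoint_partialIsometry (h : IsPolarDecomp T V A) :
    (adjoint V).ker = (adjoint T).ker := by
  have hT : adjoint T = A * adjoint V := by
    rw [h.eq_mul, ← star_eq_adjoint, star_mul, h.isSelfAdjoint_abs.star_eq, star_eq_adjoint]
  refine le_antisymm (fun x hx => ?_) (fun x hx => ?_)
  · simp_all [LinearMap.mem_ker]
  · have hAx : A (adjoint V x) = 0 := by simpa [hT] using hx
    have := congr($(h.isPartialIsometry.star_mul_self_mul_star) x)
    change adjoint V (V (adjoint V x)) = adjoint V x at this
    rw [(h.apply_eq_zero_iff _).mpr hAx, map_zero] at this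
    exact this.symm

theorem commute_abs (h : IsPolarDecomp T V A) {S : H →L[ℂ] H} (h₁ : Commute T S)
    (h₂ : Commute T (star S)) : Commute S A :=
  h.cfcAbs_eq ▸ h₁.cfcAbs_right h₂

theorem commute_partialIsometry (h : IsPolarDecomp T V A) {S : H →L[ℂ] H} (h₁ : Commute T S)
    (h₂ : Commute T (star S)) : Commute S V := by
  have hSA := h.commute_abs h₁ h₂
  refine h.isSelfAdjoint_abs.eq_of_mul_eq_of_ker_le ?_ (fun x hx => ?_) (fun x hx => ?_)
  · rw [mul_assoc S, ← h.eq_mul, mul_assoc V, hSA.eq, ← mul_assoc, ← h.eq_mul, h₁.eq]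
  · simp [(h.apply_eq_zero_iff x).mpr hx]
  · have hx' : A x = 0 := hx
    have : A (S x) = 0 := by simpa [hx'] using congr($(hSA.eq) x).symm
    simp [(h.apply_eq_zero_iff _).mpr this]

theorem abs_mem (h : IsPolarDecomp T V A) (hT : T ∈ N) : A ∈ N :=
  VonNeumannAlgebra.mem_of_forall_commute fun _ hS =>
    h.commute_abs (VonNeumannAlgebra.mem_commutant_iff.mp hS T hT)
      (VonNeumannAlgebra.mem_commutant_iff.mp (star_mem hS) T hT)

theorem partialIsometry_mem (h : IsPolarDecomp T V A) (hT : T ∈ N) : V ∈ N :=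
  VonNeumannAlgebra.mem_of_forall_commute fun _ hS =>
    h.commute_partialIsometry (VonNeumannAlgebra.mem_commutant_iff.mp hS T hT)
      (VonNeumannAlgebra.mem_commutant_iff.mp (star_mem hS) T hT)

theorem partialIsometry_mul_eq (h : IsPolarDecomp T V A) {Q : H →L[ℂ] H} (hTQ : T * Q = T) :
    V * Q = V := by
  have hAQ : A * Q = A := by rw [← h.star_mul_eq_abs, mul_assoc, hTQ]
  ext x
  have : A (Q x - x) = 0 := by simpa [sub_eq_zero] using congr($hAQ x)
  simpa [sub_eq_zero] using (h.apply_eq_zero_iff _).mpr this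

theorem mul_partialIsometry_eq (h : IsPolarDecomp T V A) {P : H →L[ℂ] H} (hPT : P * T = T) :
    P * V = V :=
  h.isSelfAdjoint_abs.eq_of_mul_eq_of_ker_le (by rw [mul_assoc, ← h.eq_mul, hPT, h.eq_mul])
    (fun x hx => by simp [(h.apply_eq_zero_iff x).mpr hx])
    (fun x hx => (h.apply_eq_zero_iff x).mpr hx)

theorem memCorner_partialIsometry (h : IsPolarDecomp T V A) {P Q : H →L[ℂ] H}
    (hP : IsIdempotentElem P) (hQ : IsIdempotentElem Q) (hT : MemCorner N P Q T) :
    MemCorner N P Q V := by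
  refine ⟨h.partialIsometry_mem hT.1, ?_⟩
  change P * (V * Q) = V
  rw [h.partialIsometry_mul_eq (hT.mul_right_eq hQ), h.mul_partialIsometry_eq (hT.mul_left_eq hP)]

theorem memCorner_abs (h : IsPolarDecomp T V A) {P Q : H →L[ℂ] H} (hQ : IsStarProjection Q)
    (hT : MemCorner N P Q T) : MemCorner N Q Q A := by
  have hAQ : A * Q = A := by
    rw [← h.star_mul_eq_abs, mul_assoc, hT.mul_right_eq hQ.isIdempotentElem]
  have hQA : Q * A = A := by
    simpa [star_mul, hQ.isSelfAdjoint.star_eq, h.isSelfAdjoint_abs.star_eq] using congr(star $hAQ)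
  refine ⟨h.abs_mem hT.1, ?_⟩
  change Q * (A * Q) = A
  rw [hAQ, hQA]

theorem isPQFredholm_partialIsometry (h : IsPolarDecomp T V A) {tr : Trace N} {P Q : H →L[ℂ] H}
    (hF : IsPQFredholm tr P Q T) : IsPQFredholm tr P Q V := by
  obtain ⟨hker, hcoker, E, hEN, hE, hPE, hτE, hrange⟩ := hF
  refine ⟨by rwa [kerProjIn_congr h.ker_partialIsometry],
    by rwa [kerProjIn_congr h.ker_adjoint_partialIsometry], E, hEN, hE, hPE, hτE, ?_⟩
  rw [h.eq_mul] at hrange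
  exact hrange.trans (LinearMap.range_comp_le_range _ _)

theorem pqIndex_partialIsometry (h : IsPolarDecomp T V A) (tr : Trace N) (P Q : H →L[ℂ] H) :
    pqIndex tr P Q V = pqIndex tr P Q T := by
  rw [pqIndex, pqIndex, kerProjIn_congr h.ker_partialIsometry,
    kerProjIn_congr h.ker_adjoint_partialIsometry]

theorem mul_star_mul_of_range_le (h : IsPolarDecomp T V A) {F : H →L[ℂ] H}
    (hF : F.range ≤ T.range) : V * star V * F = F := by
  ext x
  obtain ⟨y, hy : T y = F x⟩ := hF ⟨x, rfl⟩
  change V (star V (F x)) = F x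
  rw [← hy]
  exact congr($(h.mul_star_mul_eq) y)

theorem range_star_mul_mul_le (h : IsPolarDecomp T V A) {F : H →L[ℂ] H}
    (hF : F.range ≤ T.range) : (star V * F * V).range ≤ A.range := by
  rintro _ ⟨x, rfl⟩
  obtain ⟨y, hy : T y = F (V x)⟩ := hF ⟨V x, rfl⟩
  refine ⟨y, ?_⟩
  rw [← h.star_mul_eq_abs]
  exact congr(star V $hy)

-- With `E` the witness for `T`, the witness for `A` is `Q - V*V + V*EV = Q - V*(P - E)V`:
-- the first form is visibly in `N` and `τ`-finite, the second a projection below `Q`.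
theorem isPQFredholm_abs (h : IsPolarDecomp T V A) {tr : Trace N} {P Q : H →L[ℂ] H}
    (hP : IsStarProjection P) (hQN : Q ∈ N) (hQ : IsStarProjection Q) (hT : MemCorner N P Q T)
    (hF : IsPQFredholm tr P Q T) : IsPQFredholm tr Q Q A := by
  obtain ⟨hker, -, E, hEN, hE, hPE, hτE, hrange⟩ := hF
  rw [isProjOp_iff_isStarProjection] at hE
  have hVN := h.partialIsometry_mem hT.1
  have hVQ := h.partialIsometry_mul_eq (hT.mul_right_eq hQ.isIdempotentElem)
  have hPV := h.mul_partialIsometry_eq (hT.mul_left_eq hP.isIdempotentElem)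
  have hτA : tr.τ (kerProjIn A Q) < ∞ := by rwa [kerProjIn_congr h.ker_abs]
  have hkerA : kerProjIn A Q = Q - star V * V := by
    rw [kerProjIn_congr (h.ker_abs.trans h.ker_partialIsometry.symm),
      h.isPartialIsometry.kerProjIn_eq hQ hVQ]
  set R := star V * (P - E) * V
  have hR : IsStarProjection R :=
    (hE.sub_of_mul_eq_right hP hPE).star_left_conjugate (h.mul_star_mul_of_range_le hrange)
  have hRQ : R * Q = R := by rw [mul_assoc, hVQ]
  have hQR : Q * R = R := by
    have := congr(star $hRQ)
    rwa [star_mul, hR.isSelfAdjoint.star_eq, hQ.isSelfAdjoint.star_eq] at this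
  have hE' : Q - star V * V + star V * E * V = Q - R := by
    simp only [R, mul_sub, sub_mul, mul_assoc, hPV]
    abel
  refine ⟨hτA, by rwa [h.isSelfAdjoint_abs.adjoint_eq], Q - star V * V + star V * E * V,
    add_mem (sub_mem hQN (mul_mem (star_mem hVN) hVN)) (mul_mem (mul_mem (star_mem hVN) hEN) hVN),
    ?_, ?_, ?_, ?_⟩
  · rw [isProjOp_iff_isStarProjection, hE']
    exact hR.sub_of_mul_eq_left hQ hRQ
  · change Q * _ = _
    rw [hE', mul_sub, hQ.isIdempotentElem.eq, hQR]
  · have hG := (nonneg_iff_isPositive _).mp (isStarProjection_kerProjIn A Q).nonneg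
    have hVEV := (nonneg_iff_isPositive _).mp (star_left_conjugate_nonneg hE.nonneg V)
    rw [← hkerA, tr.map_add _ _ hG hVEV]
    exact ENNReal.add_lt_top.mpr
      ⟨hτA, (tr.τ_star_mul_mul_le hE h.isPartialIsometry).trans_lt hτE⟩
  · rw [hE', sub_sub_cancel]
    exact h.range_star_mul_mul_le hrange

end IsPolarDecomp

theorem polar_parts_fredholm_general (tr : Trace N) (P Q T V A : H →L[ℂ] H)
    (hPproj : IsProjOp P) (hQ : Q ∈ N) (hQproj : IsProjOp Q)
    (hT : MemCorner N P Q T) (hpolar : IsPolarDecomp T V A)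
    (hF : IsPQFredholm tr P Q T) :
    MemCorner N P Q V ∧ IsPQFredholm tr P Q V ∧ pqIndex tr P Q V = pqIndex tr P Q T ∧
      MemCorner N Q Q A ∧ IsPQFredholm tr Q Q A ∧ pqIndex tr Q Q A = 0 := by
  rw [isProjOp_iff_isStarProjection] at hPproj hQproj
  exact ⟨hpolar.memCorner_partialIsometry hPproj.isIdempotentElem hQproj.isIdempotentElem hT,
    hpolar.isPQFredholm_partialIsometry hF, hpolar.pqIndex_partialIsometry tr P Q,
    hpolar.memCorner_abs hQproj hT, hpolar.isPQFredholm_abs hPproj hQ hQproj hT hF,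
    pqIndex_self_eq_zero_of_isSelfAdjoint tr hpolar.isSelfAdjoint_abs⟩

/-- If `T = V|T| ∈ PNQ` is `(P·Q)`-Fredholm, then the partial isometry `V` is
`(P·Q)`-Fredholm with `Ind(V) = Ind(T)`, and `|T| ∈ QNQ` is `(Q·Q)`-Fredholm of index `0`. -/
theorem polar_parts_fredholm (tr : Trace N) (P Q T V A : H →L[ℂ] H)
    (hP : P ∈ N) (hPproj : IsProjOp P) (hQ : Q ∈ N) (hQproj : IsProjOp Q)
    (hT : MemCorner N P Q T) (hpolar : IsPolarDecomp T V A)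
    (hF : IsPQFredholm tr P Q T) :
    MemCorner N P Q V ∧ IsPQFredholm tr P Q V ∧ pqIndex tr P Q V = pqIndex tr P Q T ∧
      MemCorner N Q Q A ∧ IsPQFredholm tr Q Q A ∧ pqIndex tr Q Q A = 0 :=
  polar_parts_fredholm_general tr P Q T V A hPproj hQ hQproj hT hpolar hF

end
end
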